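/- Let X be a real Banach space and Y a proper closed subspace of X that is an M-ideal in X, so that X* = Y^⊥ ⊕₁ Z, i.e., there is a bounded linear projection P : X* → X* with range Y^⊥, kernel Z, and ‖F‖ = ‖P(F)‖ + ‖F − P(F)‖ for all F ∈ X*. If Z is a norming subspace of X*, i.e., ‖x‖ = sup{|F(x)| : F ∈ Z, ‖F‖ ≤ 1} for every x ∈ X, then both X and Y have the strong diameter two property. -/

import Mathlib

/-!
Write `Z = ker P`, so `X* = Y^⊥ ⊕₁ Z` and restriction to `Y` is isometric on `Z`. The heart is an
approximation property: any `x ∈ B_X` can be moved along `Y` to a point `w` with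
`‖w ± y_k‖ < 1 + ε` for finitely many `y_k ∈ B_Y` and `|φ_j w| < ε` for finitely many `φ_j ∈ Z`.
Otherwise a functional `(F, Λ)` on `X^ι × ℝ^J` separates the two relevant convex sets, and the
L-decomposition bounds its value at the natural point by `Σ ‖F_k‖`, which is too small.
Starting from `x` at distance almost one from `Y` (Riesz), `w` has norm almost one, so the
norming hypothesis gives `T ∈ B_Z` with `T w` almost one; testing `g_k ± T` at `y_k ± w`, where
`y_k` nearly norms `g_k ∈ B_Z`, gives `‖g_k ± T‖ ≥ ‖g_k‖ + 1 - ε`. As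
`‖F ± T‖ = ‖P F‖ + ‖F - P F ± T‖` for `T ∈ Z`, norm-one functionals on `X` (or on `Y`, extended
into `Z`) satisfy `‖f_i ± T‖ ≥ 2 - ε`, and points nearly norming `f_i + T` and `f_i - T` give two
convex combinations of slices at distance almost two.
-/

/-- A real normed space `E` has the strong diameter two property (SD2P) if
every convex combination of slices of the unit ball has diameter two. -/
def HasSD2P (E : Type*) [NormedAddCommGroup E] [NormedSpace ℝ E] : Prop :=
  ∀ n : ℕ, 0 < n →
    ∀ (f : Fin n → StrongDual ℝ E) (e l : Fin n → ℝ),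
      (∀ i, ‖f i‖ = 1) → (∀ i, 0 < e i) → (∀ i, 0 ≤ l i) → (∑ i, l i) = 1 →
      Metric.diam {z : E | ∃ g : Fin n → E,
        (∀ i, ‖g i‖ ≤ 1 ∧ f i (g i) > 1 - e i) ∧ z = ∑ i, l i • g i} = 2

open Metric

section Dual

variable {E : Type*} [NormedAddCommGroup E] [NormedSpace ℝ E]

theorem apply_le_norm_of_norm_le_one (f : StrongDual ℝ E) {x : E} (hx : ‖x‖ ≤ 1) : f x ≤ ‖f‖ :=
  (Real.le_norm_self _).trans (f.unit_le_opNorm x hx)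

theorem exists_norm_lt_one_lt_apply (f : StrongDual ℝ E) {r : ℝ} (hr : r < ‖f‖) :
    ∃ u : E, ‖u‖ < 1 ∧ r < f u := by
  obtain ⟨u, hu, hru⟩ := f.exists_lt_apply_of_lt_opNorm hr
  rcases lt_abs.1 (Real.norm_eq_abs (f u) ▸ hru) with h | h
  · exact ⟨u, hu, h⟩
  · exact ⟨-u, by rwa [norm_neg], by rwa [map_neg]⟩

theorem exists_lt_apply_and_lt_apply {f T : StrongDual ℝ E} (hf : ‖f‖ ≤ 1) (hT : ‖T‖ ≤ 1)
    {ε : ℝ} (h : 2 - ε < ‖f + T‖) : ∃ u : E, ‖u‖ ≤ 1 ∧ 1 - ε < f u ∧ 1 - ε < T u := by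
  obtain ⟨u, hu, hfTu⟩ := exists_norm_lt_one_lt_apply (f + T) h
  have hfu := (apply_le_norm_of_norm_le_one f hu.le).trans hf
  have hTu := (apply_le_norm_of_norm_le_one T hu.le).trans hT
  rw [add_apply] at hfTu
  exact ⟨u, hu.le, by linarith, by linarith⟩

theorem mul_sum_norm_le_of_forall_lt {ι : Type*} [Fintype ι] (F : ι → StrongDual ℝ E)
    {r s : ℝ} (hr : 0 < r) (h : ∀ u : ι → E, (∀ k, ‖u k‖ < r) → ∑ k, F k (u k) < s) :
    r * ∑ k, ‖F k‖ ≤ s := by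
  refine le_of_forall_pos_lt_add fun δ hδ => ?_
  set η := δ / (r * (Fintype.card ι + 1))
  have hη : 0 < η := by positivity
  have hslack : r * (Fintype.card ι * η) < δ := by
    have : r * (Fintype.card ι * η) = δ * (Fintype.card ι / (Fintype.card ι + 1)) := by
      simp only [η]; field_simp
    rw [this]
    exact mul_lt_of_lt_one_right hδ ((div_lt_one (by positivity)).2 (lt_add_one _))
  choose u hu hFu using fun k => exists_norm_lt_one_lt_apply (F k) (sub_lt_self ‖F k‖ hη)
  have hsum := h (fun k => r • u k) fun k => by
    rw [norm_smul, Real.norm_of_nonneg hr.le]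
    exact mul_lt_of_lt_one_right hr (hu k)
  calc r * ∑ k, ‖F k‖ = r * ∑ k, (‖F k‖ - η) + r * (Fintype.card ι * η) := by
        simp only [Finset.sum_sub_distrib, Finset.sum_const, Finset.card_univ, nsmul_eq_mul]
        ring
    _ < r * ∑ k, F k (u k) + δ := add_lt_add_of_le_of_lt
        (mul_le_mul_of_nonneg_left (Finset.sum_le_sum fun k _ => (hFu k).le) hr.le) hslack
    _ = ∑ k, F k (r • u k) + δ := by simp only [map_smul, smul_eq_mul, Finset.mul_sum]
    _ < s + δ := by linarith

theorem exists_apply_prod_eq_sum_add {ι V : Type*} [Fintype ι] [NormedAddCommGroup V]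
    [NormedSpace ℝ V] (Λ : StrongDual ℝ ((ι → E) × V)) :
    ∃ (F : ι → StrongDual ℝ E) (Λ₂ : StrongDual ℝ V), ∀ u t, Λ (u, t) = ∑ k, F k (u k) + Λ₂ t := by
  classical
  refine ⟨fun k => Λ.comp ((ContinuousLinearMap.inl ℝ _ _).comp
    (ContinuousLinearMap.single ℝ (fun _ => E) k)), Λ.comp (ContinuousLinearMap.inr ℝ _ _),
    fun u t => ?_⟩
  have hu : Λ (u, 0) = ∑ k, Λ (Pi.single k (u k), 0) := by
    conv_lhs => rw [← Finset.univ_sum_single u]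
    exact map_sum (Λ.comp (ContinuousLinearMap.inl ℝ _ _)) _ _
  rw [← add_zero u, ← zero_add t, ← Prod.mk_add_mk, map_add, add_zero, zero_add, hu]
  rfl

theorem two_sub_two_mul_le_norm_sum_smul_sub {ι : Type*} [Fintype ι] {l : ι → ℝ}
    (hl : ∀ i, 0 ≤ l i) (hsum : ∑ i, l i = 1) {T : StrongDual ℝ E} (hT : ‖T‖ ≤ 1)
    {u v : ι → E} {δ : ℝ} (hu : ∀ i, 1 - δ < T (u i)) (hv : ∀ i, 1 - δ < (-T) (v i)) :
    2 - 2 * δ ≤ ‖∑ i, l i • u i - ∑ i, l i • v i‖ := by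
  have hTuv : 2 - 2 * δ ≤ T (∑ i, l i • u i - ∑ i, l i • v i) := by
    simp only [map_sub, map_sum, map_smul, smul_eq_mul, ← Finset.sum_sub_distrib, ← mul_sub]
    calc 2 - 2 * δ = ∑ i, l i * (2 - 2 * δ) := by rw [← Finset.sum_mul, hsum, one_mul]
      _ ≤ _ := Finset.sum_le_sum fun i _ => mul_le_mul_of_nonneg_left
          (by linarith [hu i, hv i, neg_apply T (v i)]) (hl i)
  linarith [(Real.le_norm_self _).trans (T.le_of_opNorm_le hT (∑ i, l i • u i - ∑ i, l i • v i))]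

theorem hasSD2P_of_forall_exists_two_sub_le_norm_add_sub
    (h : ∀ (n : ℕ) (f : Fin n → StrongDual ℝ E) (ε : ℝ), 0 < ε → (∀ i, ‖f i‖ = 1) →
      ∃ T : StrongDual ℝ E, ‖T‖ ≤ 1 ∧ ∀ i, 2 - ε ≤ ‖f i + T‖ ∧ 2 - ε ≤ ‖f i - T‖) :
    HasSD2P E := by
  intro n hn f e l hf he hl hsum
  set D := {z : E | ∃ g : Fin n → E,
    (∀ i, ‖g i‖ ≤ 1 ∧ f i (g i) > 1 - e i) ∧ z = ∑ i, l i • g i}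
  have hD : D ⊆ closedBall 0 1 := by
    rintro _ ⟨g, hg, rfl⟩
    exact (convex_closedBall 0 1).sum_mem (fun i _ => hl i) hsum
      fun i _ => mem_closedBall_zero_iff.2 (hg i).1
  refine le_antisymm ((diam_mono hD isBounded_closedBall).trans ?_) ?_
  · simpa using diam_closedBall (x := (0 : E)) zero_le_one
  refine le_of_forall_pos_le_add fun η hη => ?_
  have : Nonempty (Fin n) := ⟨⟨0, hn⟩⟩
  obtain ⟨i₀, hi₀⟩ := Finite.exists_min e
  set δ := min (η / 2) (e i₀)
  have hδ : 0 < δ := lt_min (by linarith) (he i₀)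
  have hδe : ∀ i, δ ≤ e i := fun i => (min_le_right _ _).trans (hi₀ i)
  obtain ⟨T, hT, hfT⟩ := h n f (δ / 2) (by positivity) hf
  choose u hu hfu hTu using fun i => exists_lt_apply_and_lt_apply (hf i).le hT
    (show 2 - δ < ‖f i + T‖ by linarith [(hfT i).1])
  choose v hv hfv hTv using fun i => exists_lt_apply_and_lt_apply (hf i).le
    (by rwa [norm_neg] : ‖-T‖ ≤ 1) (show 2 - δ < ‖f i + -T‖ by
      rw [← sub_eq_add_neg]; linarith [(hfT i).2])
  have hu_mem : ∑ i, l i • u i ∈ D :=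
    ⟨u, fun i => ⟨hu i, by linarith [hfu i, hδe i]⟩, rfl⟩
  have hv_mem : ∑ i, l i • v i ∈ D :=
    ⟨v, fun i => ⟨hv i, by linarith [hfv i, hδe i]⟩, rfl⟩
  calc 2 ≤ ‖∑ i, l i • u i - ∑ i, l i • v i‖ + η := by
        have := two_sub_two_mul_le_norm_sum_smul_sub hl hsum hT hTu hTv
        have : δ ≤ η / 2 := min_le_left _ _
        linarith
    _ ≤ diam D + η := by
        rw [← dist_eq_norm]
        gcongr
        exact dist_le_diam_of_mem (isBounded_closedBall.subset hD) hu_mem hv_mem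

end Dual

theorem LinearMap.apply_eq_zero_of_forall_mem_le {M : Type*} [AddCommGroup M] [Module ℝ M]
    (f : M →ₗ[ℝ] ℝ) {Y : Submodule ℝ M} {C : ℝ} (h : ∀ y ∈ Y, f y ≤ C) {y : M} (hy : y ∈ Y) :
    f y = 0 := by
  by_contra hne
  have := h (((C + 1) / f y) • y) (Y.smul_mem _ hy)
  rw [map_smul, smul_eq_mul, div_mul_cancel₀ _ hne] at this
  linarith

section MIdeal

variable {X : Type*} [NormedAddCommGroup X] [NormedSpace ℝ X]

theorem norm_comp_subtypeL_le (g : StrongDual ℝ X) (Y : Subspace ℝ X) :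
    ‖g.comp Y.subtypeL‖ ≤ ‖g‖ :=
  (g.opNorm_comp_le _).trans (mul_le_of_le_one_right (norm_nonneg g) Y.norm_subtypeL_le)

theorem exists_lt_apply_of_norm_eq_sSup {p : StrongDual ℝ X → Prop} (hp0 : p 0)
    (hneg : ∀ F, p F → p (-F)) {x : X}
    (hx : ‖x‖ = sSup {r : ℝ | ∃ F : StrongDual ℝ X, p F ∧ ‖F‖ ≤ 1 ∧ r = |F x|})
    {r : ℝ} (hr : r < ‖x‖) : ∃ F, p F ∧ ‖F‖ ≤ 1 ∧ r < F x := by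
  rw [hx] at hr
  obtain ⟨_, ⟨F, hF, hF1, rfl⟩, hrF⟩ :=
    exists_lt_of_lt_csSup (by exact ⟨0, 0, hp0, by simp, by simp⟩) hr
  rcases lt_abs.1 hrF with h | h
  · exact ⟨F, hF, hF1, h⟩
  · exact ⟨-F, hneg F hF, by rwa [norm_neg], by simpa using h⟩

theorem map_comp_pi_eq_zero {J : Type*} [Fintype J]
    (P : StrongDual ℝ X →L[ℝ] StrongDual ℝ X) {φ : J → StrongDual ℝ X} (hφ : ∀ j, P (φ j) = 0)
    (f : StrongDual ℝ (J → ℝ)) : P (f.comp (ContinuousLinearMap.pi φ)) = 0 := by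
  classical
  have hf : f.comp (ContinuousLinearMap.pi φ) = ∑ j, f (Pi.single j 1) • φ j := by
    ext z
    have hz : ContinuousLinearMap.pi φ z = ∑ j, φ j z • Pi.single j (1 : ℝ) := by
      ext i
      simp [Pi.single_apply]
    simp [hz, mul_comm]
  simp [hf, hφ]

theorem norm_add_one_sub_le_norm_add {g T : StrongDual ℝ X} {w y : X} {δ : ℝ} (hδ : 0 ≤ δ)
    (hg : ‖g‖ ≤ 1) (hT : ‖T‖ ≤ 1) (hwy : ‖w + y‖ ≤ 1 + δ) (hwy' : ‖w - y‖ ≤ 1 + δ)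
    (hgw : |g w| ≤ δ) (hgy : ‖g‖ - δ < g y) (hTw : 1 - 2 * δ < T w) :
    ‖g‖ + 1 - 9 * δ ≤ ‖g + T‖ := by
  have hTy : T (w - y) ≤ 1 + δ :=
    (Real.le_norm_self _).trans ((T.le_of_opNorm_le hT _).trans (by linarith))
  have hlow : ‖g‖ + 1 - 7 * δ ≤ (g + T) (w + y) := by
    simp only [add_apply, map_add] at hTy ⊢
    rw [map_sub] at hTy
    linarith [(abs_le.1 hgw).1]
  have hup : (g + T) (w + y) ≤ ‖g + T‖ * (1 + δ) :=
    (Real.le_norm_self _).trans ((g + T).le_opNorm_of_le hwy)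
  nlinarith [norm_nonneg g, norm_nonneg (g + T), mul_nonneg hδ (sub_nonneg.2 hg)]

structure IsMIdealProjection (Y : Subspace ℝ X) (P : StrongDual ℝ X →L[ℝ] StrongDual ℝ X) :
    Prop where
  idem : ∀ F, P (P F) = P F
  range_eq : Set.range (fun F => P F) = {F : StrongDual ℝ X | ∀ y ∈ Y, F y = 0}
  norm_eq : ∀ F, ‖F‖ = ‖P F‖ + ‖F - P F‖

namespace IsMIdealProjection

variable {Y : Subspace ℝ X} {P : StrongDual ℝ X →L[ℝ] StrongDual ℝ X}

theorem apply_apply_eq_zero (hP : IsMIdealProjection Y P) (F : StrongDual ℝ X) {y : X}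
    (hy : y ∈ Y) : P F y = 0 := by
  have : P F ∈ {F : StrongDual ℝ X | ∀ y ∈ Y, F y = 0} := hP.range_eq ▸ ⟨F, rfl⟩
  exact this y hy

theorem apply_eq_self (hP : IsMIdealProjection Y P) {F : StrongDual ℝ X}
    (hF : ∀ y ∈ Y, F y = 0) : P F = F := by
  obtain ⟨G, rfl⟩ : F ∈ Set.range (fun F => P F) := hP.range_eq ▸ hF
  exact hP.idem G

theorem apply_sub_apply_eq_zero (hP : IsMIdealProjection Y P) (F : StrongDual ℝ X) :
    P (F - P F) = 0 := by
  rw [map_sub, hP.idem, sub_self]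

theorem norm_add_of_apply_eq_zero (hP : IsMIdealProjection Y P) (F : StrongDual ℝ X)
    {T : StrongDual ℝ X} (hT : P T = 0) : ‖F + T‖ = ‖P F‖ + ‖F - P F + T‖ := by
  rw [hP.norm_eq (F + T), map_add, hT, add_zero, sub_add_eq_add_sub]

theorem exists_ker_extension_norm_eq (hP : IsMIdealProjection Y P) (φ : StrongDual ℝ Y) :
    ∃ g : StrongDual ℝ X, P g = 0 ∧ g.comp Y.subtypeL = φ ∧ ‖g‖ = ‖φ‖ := by
  obtain ⟨f, hfφ, hfn⟩ := exists_extension_norm_eq Y φ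
  have hres : (f - P f).comp Y.subtypeL = φ := by
    ext v
    simp [hP.apply_apply_eq_zero f v.2, hfφ]
  refine ⟨f - P f, hP.apply_sub_apply_eq_zero f, hres, le_antisymm ?_ ?_⟩
  · linarith [hP.norm_eq f, norm_nonneg (P f)]
  · exact hres ▸ norm_comp_subtypeL_le _ Y

theorem norm_comp_subtypeL (hP : IsMIdealProjection Y P) {g : StrongDual ℝ X} (hg : P g = 0) :
    ‖g.comp Y.subtypeL‖ = ‖g‖ := by
  obtain ⟨g', hg'0, hg'g, hg'n⟩ := hP.exists_ker_extension_norm_eq (g.comp Y.subtypeL)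
  have hsub : P (g' - g) = g' - g := hP.apply_eq_self fun y hy => by
    simpa [sub_eq_zero] using congr($hg'g ⟨y, hy⟩)
  rw [map_sub, hg'0, hg, sub_zero, eq_comm, sub_eq_zero] at hsub
  rw [← hg'n, hsub]

theorem exists_mem_norm_lt_one_lt_apply (hP : IsMIdealProjection Y P) {g : StrongDual ℝ X}
    (hg : P g = 0) {r : ℝ} (hr : r < ‖g‖) : ∃ y ∈ Y, ‖y‖ < 1 ∧ r < g y := by
  rw [← hP.norm_comp_subtypeL hg] at hr
  obtain ⟨v, hv, hgv⟩ := exists_norm_lt_one_lt_apply _ hr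
  exact ⟨v, v.2, hv, hgv⟩

theorem sum_apply_add_le_sum_norm (hP : IsMIdealProjection Y P) {ι : Type*} [Fintype ι]
    (F : ι → StrongDual ℝ X) {ψ : StrongDual ℝ X} (hψ : P ψ = 0)
    (hY : ∀ v ∈ Y, (∑ k, F k) v + ψ v = 0) {x : X} (hx : ‖x‖ ≤ 1) (y : ι → X)
    (hyY : ∀ k, y k ∈ Y) (hy1 : ∀ k, ‖y k‖ ≤ 1) :
    ∑ k, F k (x + y k) + ψ x ≤ ∑ k, ‖F k‖ := by
  have hPF : P (∑ k, F k) = ∑ k, F k + ψ := by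
    have := hP.apply_eq_self (F := ∑ k, F k + ψ) fun v hv => by simpa using hY v hv
    rwa [map_add, hψ, add_zero] at this
  calc ∑ k, F k (x + y k) + ψ x = P (∑ k, F k) x + ∑ k, (F k - P (F k)) (y k) := by
        simp [hPF, hP.apply_apply_eq_zero _ (hyY _), Finset.sum_add_distrib]
        ring
    _ ≤ ‖P (∑ k, F k)‖ + ∑ k, ‖F k - P (F k)‖ :=
        add_le_add (apply_le_norm_of_norm_le_one _ hx)
          (Finset.sum_le_sum fun k _ => apply_le_norm_of_norm_le_one _ (hy1 k))
    _ ≤ ∑ k, ‖P (F k)‖ + ∑ k, ‖F k - P (F k)‖ := by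
        rw [map_sum]
        gcongr
        exact norm_sum_le _ _
    _ = ∑ k, ‖F k‖ := by
        rw [← Finset.sum_add_distrib]
        exact Finset.sum_congr rfl fun k _ => (hP.norm_eq (F k)).symm

theorem le_sum_norm_of_forall_le (hP : IsMIdealProjection Y P) {ι J : Type*} [Fintype ι]
    [Fintype J] (y : ι → X) (hyY : ∀ k, y k ∈ Y) (hy1 : ∀ k, ‖y k‖ ≤ 1)
    {φ : J → StrongDual ℝ X} (hφ : ∀ j, P (φ j) = 0) {x : X} (hx : ‖x‖ ≤ 1)
    (F : ι → StrongDual ℝ X) (Λ : StrongDual ℝ (J → ℝ)) {s : ℝ}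
    (h : ∀ v ∈ Y, s ≤ ∑ k, F k (x + y k - v) + Λ (ContinuousLinearMap.pi φ (x - v))) :
    s ≤ ∑ k, ‖F k‖ := by
  set ψ := Λ.comp (ContinuousLinearMap.pi φ)
  have hψ : ∀ v, ∑ k, F k (x + y k - v) + ψ (x - v) =
      ∑ k, F k (x + y k) + ψ x - ((∑ k, F k) v + ψ v) := fun v => by
    simp only [map_sub, sum_apply, Finset.sum_sub_distrib]
    ring
  have hvanish : ∀ v ∈ Y, (∑ k, F k) v + ψ v = 0 := fun v hv =>
    LinearMap.apply_eq_zero_of_forall_mem_le ((∑ k, F k + ψ : StrongDual ℝ X) : X →ₗ[ℝ] ℝ)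
      (C := ∑ k, F k (x + y k) + ψ x - s)
      (fun v hv => by
        have := (h v hv).trans_eq (hψ v)
        simp only [ContinuousLinearMap.coe_coe, add_apply]
        linarith) hv
  calc s ≤ ∑ k, F k (x + y k) + ψ x := by simpa using (h 0 Y.zero_mem).trans_eq (hψ 0)
    _ ≤ ∑ k, ‖F k‖ :=
        hP.sum_apply_add_le_sum_norm F (map_comp_pi_eq_zero P hφ _) hvanish hx y hyY hy1

theorem exists_sub_mem_forall_norm_add_lt (hP : IsMIdealProjection Y P) {ι J : Type*}
    [Fintype ι] [Fintype J] (y : ι → X) (hyY : ∀ k, y k ∈ Y) (hy1 : ∀ k, ‖y k‖ ≤ 1)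
    (φ : J → StrongDual ℝ X) (hφ : ∀ j, P (φ j) = 0) {x : X} (hx : ‖x‖ ≤ 1) {ε : ℝ}
    (hε : 0 < ε) : ∃ w, x - w ∈ Y ∧ (∀ k, ‖w + y k‖ < 1 + ε) ∧ ∀ j, |φ j w| < ε := by
  by_contra! h
  set A : Set ((ι → X) × (J → ℝ)) := ball 0 (1 + ε) ×ˢ ball 0 ε
  set D : Set ((ι → X) × (J → ℝ)) :=
    (fun v => (fun k => x + y k - v, ContinuousLinearMap.pi φ (x - v))) '' Y
  have hAD : Disjoint A D := by
    rw [Set.disjoint_left]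
    rintro _ ⟨hu, ht⟩ ⟨v, hv, rfl⟩
    rw [mem_ball_zero_iff, pi_norm_lt_iff (by linarith)] at hu
    rw [mem_ball_zero_iff, pi_norm_lt_iff hε] at ht
    obtain ⟨j, hj⟩ := h (x - v) (by simpa using hv) fun k => by
      simpa [sub_add_eq_add_sub] using hu k
    have := ht j
    simp only [ContinuousLinearMap.pi_apply, Real.norm_eq_abs] at this
    linarith
  have hD : Convex ℝ D := by
    rintro _ ⟨v₁, hv₁, rfl⟩ _ ⟨v₂, hv₂, rfl⟩ a b ha hb hab
    refine ⟨a • v₁ + b • v₂, Y.convex hv₁ hv₂ ha hb hab, ?_⟩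
    obtain rfl : b = 1 - a := by linarith
    ext <;> simp only [map_sub, map_add, map_smul, ContinuousLinearMap.pi_apply, Prod.smul_mk,
      Prod.mk_add_mk, Pi.add_apply, Pi.sub_apply, Pi.smul_apply, smul_eq_mul]
    · module
    · ring
  obtain ⟨Λ, s, hΛA, hΛD⟩ := geometric_hahn_banach_open
    ((convex_ball _ _).prod (convex_ball _ _)) (isOpen_ball.prod isOpen_ball) hD hAD
  obtain ⟨F, Λ₂, hΛ⟩ := exists_apply_prod_eq_sum_add Λ
  have hs : 0 < s := by
    simpa using hΛA 0 ⟨mem_ball_self (by linarith), mem_ball_self hε⟩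
  have hball : (1 + ε) * ∑ k, ‖F k‖ ≤ s := mul_sum_norm_le_of_forall_lt F (by linarith)
    fun u hu => by
      simpa [hΛ] using hΛA (u, 0) ⟨mem_ball_zero_iff.2 ((pi_norm_lt_iff (by linarith)).2 hu),
        mem_ball_self hε⟩
  have hle := hP.le_sum_norm_of_forall_le y hyY hy1 hφ hx F Λ₂
    fun v hv => (hΛD _ ⟨v, hv, rfl⟩).trans_eq (hΛ _ _)
  nlinarith

theorem exists_ker_forall_norm_add_sub_ge (hP : IsMIdealProjection Y P)
    (hYc : IsClosed (Y : Set X)) (hproper : Y ≠ ⊤)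
    (hnorming : ∀ x : X,
      ‖x‖ = sSup {r : ℝ | ∃ F : StrongDual ℝ X, P F = 0 ∧ ‖F‖ ≤ 1 ∧ r = |F x|})
    {ι : Type*} [Fintype ι] (g : ι → StrongDual ℝ X) (hg0 : ∀ k, P (g k) = 0)
    (hg1 : ∀ k, ‖g k‖ ≤ 1) {ε : ℝ} (hε : 0 < ε) :
    ∃ T : StrongDual ℝ X, P T = 0 ∧ ‖T‖ ≤ 1 ∧
      ∀ k, ‖g k‖ + 1 - ε ≤ ‖g k + T‖ ∧ ‖g k‖ + 1 - ε ≤ ‖g k - T‖ := by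
  set δ := ε / 9
  have hδ : 0 < δ := by positivity
  have h9δ : 9 * δ = ε := mul_div_cancel₀ ε (by norm_num)
  choose y hyY hy1 hgy using fun k =>
    hP.exists_mem_norm_lt_one_lt_apply (hg0 k) (sub_lt_self ‖g k‖ hδ)
  obtain ⟨x₀, -, hx₀1, hx₀Y⟩ := riesz_lemma_of_lt_one hYc
    (by by_contra! h; exact hproper (Submodule.eq_top_iff'.2 h)) (sub_lt_self 1 hδ)
  obtain ⟨w, hwY, hwy, hgw⟩ := hP.exists_sub_mem_forall_norm_add_lt (Sum.elim y (-y))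
    (by rintro (k | k) <;> simp [hyY k, Y.neg_mem])
    (by rintro (k | k) <;> simp [(hy1 k).le]) g hg0 hx₀1.le hδ
  have hw : 1 - δ ≤ ‖w‖ := by simpa using hx₀Y _ hwY
  obtain ⟨T, hT0, hT1, hTw⟩ := exists_lt_apply_of_norm_eq_sSup (p := fun F => P F = 0)
    (map_zero P) (fun F hF => by rw [map_neg, hF, neg_zero]) (hnorming w)
    (show 1 - 2 * δ < ‖w‖ by linarith)
  have hwp : ∀ k, ‖w + y k‖ ≤ 1 + δ := fun k => (hwy (.inl k)).le
  have hwm : ∀ k, ‖w - y k‖ ≤ 1 + δ := fun k => by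
    simpa [sub_eq_add_neg] using (hwy (.inr k)).le
  refine ⟨T, hT0, hT1, fun k => ⟨?_, ?_⟩⟩
  · linarith [norm_add_one_sub_le_norm_add hδ.le (hg1 k) hT1 (hwp k) (hwm k) (hgw k).le
      (hgy k) hTw]
  · have := norm_add_one_sub_le_norm_add (w := -w) hδ.le (hg1 k) (by rwa [norm_neg])
      (by rw [neg_add_eq_sub, norm_sub_rev]; exact hwm k)
      (by rw [← neg_add', norm_neg]; exact hwp k) (by simpa using (hgw k).le) (hgy k)
      (by simpa using hTw)
    rw [← sub_eq_add_neg] at this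
    linarith

end IsMIdealProjection

end MIdeal

theorem m_ideal_norming_kernel_sd2p_general
    {X : Type*} [NormedAddCommGroup X] [NormedSpace ℝ X]
    (Y : Subspace ℝ X) (hYc : IsClosed (Y : Set X)) (hproper : Y ≠ ⊤)
    (P : StrongDual ℝ X →L[ℝ] StrongDual ℝ X)
    (hproj : ∀ F, P (P F) = P F)
    (hrange : Set.range (fun F => P F) = {F : StrongDual ℝ X | ∀ y ∈ Y, F y = 0})
    (hnorm : ∀ F, ‖F‖ = ‖P F‖ + ‖F - P F‖)
    (hnorming : ∀ x : X,
      ‖x‖ = sSup {r : ℝ | ∃ F : StrongDual ℝ X, P F = 0 ∧ ‖F‖ ≤ 1 ∧ r = |F x|}) :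
    HasSD2P X ∧ HasSD2P Y := by
  have hP : IsMIdealProjection Y P := ⟨hproj, hrange, hnorm⟩
  refine ⟨hasSD2P_of_forall_exists_two_sub_le_norm_add_sub fun n f ε hε hf => ?_,
    hasSD2P_of_forall_exists_two_sub_le_norm_add_sub fun n f ε hε hf => ?_⟩
  · obtain ⟨T, hT0, hT1, hT⟩ := hP.exists_ker_forall_norm_add_sub_ge hYc hproper hnorming
      (fun i => f i - P (f i)) (fun i => hP.apply_sub_apply_eq_zero (f i))
      (fun i => by linarith [hP.norm_eq (f i), hf i, norm_nonneg (P (f i))]) hε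
    refine ⟨T, hT1, fun i => ?_⟩
    have hplus := hP.norm_add_of_apply_eq_zero (f i) hT0
    have hminus := hP.norm_add_of_apply_eq_zero (f i) (T := -T) (by rw [map_neg, hT0, neg_zero])
    simp only [← sub_eq_add_neg] at hminus
    constructor <;> linarith [hT i, hf i, hP.norm_eq (f i)]
  · choose g hg0 hgf hgn using fun i => hP.exists_ker_extension_norm_eq (f i)
    obtain ⟨T, hT0, hT1, hT⟩ := hP.exists_ker_forall_norm_add_sub_ge hYc hproper hnorming
      g hg0 (fun i => ((hgn i).trans (hf i)).le) hε
    refine ⟨T.comp Y.subtypeL, (norm_comp_subtypeL_le T Y).trans hT1, fun i => ?_⟩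
    rw [← hgf i, ← ContinuousLinearMap.add_comp, ← ContinuousLinearMap.sub_comp,
      hP.norm_comp_subtypeL (by rw [map_add, hg0, hT0, add_zero]),
      hP.norm_comp_subtypeL (by rw [map_sub, hg0, hT0, sub_zero])]
    constructor <;> linarith [hT i, hgn i, hf i]

/-- If `Y` is a proper M-ideal in a real Banach space `X`
(witnessed by an L-projection `P` on `X*` with range `Y^⊥` and kernel `Z`)
and the kernel `Z` is a norming subspace of `X*`, then both `X` and `Y`
have the strong diameter two property. -/
theorem m_ideal_norming_kernel_sd2p
    {X : Type*} [NormedAddCommGroup X] [NormedSpace ℝ X] [CompleteSpace X]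
    (Y : Subspace ℝ X) (hYc : IsClosed (Y : Set X)) (hproper : Y ≠ ⊤)
    (P : StrongDual ℝ X →L[ℝ] StrongDual ℝ X)
    (hproj : ∀ F, P (P F) = P F)
    (hrange : Set.range (fun F => P F) = {F : StrongDual ℝ X | ∀ y ∈ Y, F y = 0})
    (hnorm : ∀ F, ‖F‖ = ‖P F‖ + ‖F - P F‖)
    (hnorming : ∀ x : X,
      ‖x‖ = sSup {r : ℝ | ∃ F : StrongDual ℝ X, P F = 0 ∧ ‖F‖ ≤ 1 ∧ r = |F x|}) :
    HasSD2P X ∧ HasSD2P Y :=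
  m_ideal_norming_kernel_sd2p_general Y hYc hproper P hproj hrange hnorm hnorming
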